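/- Let A_j = i·I^⊗(n-j) ⊗ (σ₀₁ ⊗ σ₁₀^⊗(j-1) − σ₁₀ ⊗ σ₀₁^⊗(j-1)) for 1 ≤ j ≤ n. Then for 1 < j < j' the operators A_j and A_{j'} commute, i.e. [A_j, A_{j'}] = 0 whenever j ≥ 2. -/

import Mathlib

open Matrix Complex

noncomputable section

lemma tens_bpos {a b : ℕ} (i : Fin (a * b)) : 0 < b :=
  Nat.pos_of_ne_zero fun h => absurd i.isLt (by simp [h])

/-- Kronecker (tensor) product of square matrices, with the leftmost factor acting on
the most significant part of the index. -/
def tens {a b : ℕ} (A : Matrix (Fin a) (Fin a) ℂ) (B : Matrix (Fin b) (Fin b) ℂ) :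
    Matrix (Fin (a * b)) (Fin (a * b)) ℂ := fun i j =>
  A ⟨i.val / b, Nat.div_lt_of_lt_mul (i.isLt.trans_eq (Nat.mul_comm a b))⟩
      ⟨j.val / b, Nat.div_lt_of_lt_mul (j.isLt.trans_eq (Nat.mul_comm a b))⟩ *
    B ⟨i.val % b, Nat.mod_lt _ (tens_bpos i)⟩ ⟨j.val % b, Nat.mod_lt _ (tens_bpos j)⟩

def I2 : Matrix (Fin 2) (Fin 2) ℂ := 1
def s00 : Matrix (Fin 2) (Fin 2) ℂ := !![1, 0; 0, 0]
def s01 : Matrix (Fin 2) (Fin 2) ℂ := !![0, 1; 0, 0]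
def s10 : Matrix (Fin 2) (Fin 2) ℂ := !![0, 0; 1, 0]
def s11 : Matrix (Fin 2) (Fin 2) ℂ := !![0, 0; 0, 1]
def pauliX : Matrix (Fin 2) (Fin 2) ℂ := !![0, 1; 1, 0]
def pauliZ : Matrix (Fin 2) (Fin 2) ℂ := !![1, 0; 0, -1]

/-- `k`-fold tensor power of a one-qubit operator. -/
def tensPow (M : Matrix (Fin 2) (Fin 2) ℂ) : (k : ℕ) → Matrix (Fin (2 ^ k)) (Fin (2 ^ k)) ℂ
  | 0 => 1
  | k + 1 => tens (tensPow M k) M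

lemma pow_split {n j : ℕ} (h1 : 1 ≤ j) (h2 : j ≤ n) :
    2 ^ (n - j) * 2 * 2 ^ (j - 1) = 2 ^ n := by
  rw [mul_assoc, ← pow_succ', ← pow_add]; congr 1; omega

lemma two_pow_split {j : ℕ} (h : 1 ≤ j) : 2 * 2 ^ (j - 1) = 2 ^ j := by
  rw [← pow_succ']; congr 1; omega

/-- The backward shift operator `S⁻` : entries `S⁻[k-1,k] = 1`. -/
def Sminus (n : ℕ) : Matrix (Fin (2 ^ n)) (Fin (2 ^ n)) ℂ := fun i j =>
  if i.val + 1 = j.val then 1 else 0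

/-- The forward shift operator `S⁺` : entries `S⁺[k,k-1] = 1`. -/
def Splus (n : ℕ) : Matrix (Fin (2 ^ n)) (Fin (2 ^ n)) ℂ := fun i j =>
  if j.val + 1 = i.val then 1 else 0

/-- `A_j = i·I^⊗(n-j) ⊗ (σ₀₁ ⊗ σ₁₀^⊗(j-1) − σ₁₀ ⊗ σ₀₁^⊗(j-1))` acting on `(ℂ²)^⊗n`. -/
def Amat (n j : ℕ) : Matrix (Fin (2 ^ n)) (Fin (2 ^ n)) ℂ :=
  if h : 1 ≤ j ∧ j ≤ n then
    Complex.I • (Matrix.reindex (finCongr (pow_split h.1 h.2)) (finCongr (pow_split h.1 h.2))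
      (tens (tens (tensPow I2 (n - j)) s01) (tensPow s10 (j - 1)) -
        tens (tens (tensPow I2 (n - j)) s10) (tensPow s01 (j - 1))))
  else 0

/-- Spectral (operator) norm of a square complex matrix. -/
def specNorm {m : ℕ} (M : Matrix (Fin m) (Fin m) ℂ) : ℝ :=
  ‖Matrix.toEuclideanCLM (𝕜 := ℂ) M‖



lemma keyA (b x y : ℕ) (hb : 0 < b) :
    (x / b / 2 = y / b / 2 ∧ (x / b) % 2 = 0 ∧ (y / b) % 2 = 1 ∧ x % b = b - 1 ∧ y % b = 0)
    ↔ (y = x + 1 ∧ x % (b * 2) = b - 1) := by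
  have hxm : x % (b*2) = x % b + b * (x / b % 2) := Nat.mod_mul
  have hym : y % (b*2) = y % b + b * (y / b % 2) := Nat.mod_mul
  have hxd : x / (b*2) = x / b / 2 := (Nat.div_div_eq_div_mul x b 2).symm
  have hyd : y / (b*2) = y / b / 2 := (Nat.div_div_eq_div_mul y b 2).symm
  have dx := Nat.div_add_mod x (b*2)
  have dy := Nat.div_add_mod y (b*2)
  have hxb := Nat.mod_lt x hb
  have hyb := Nat.mod_lt y hb
  constructor
  · rintro ⟨hq, hu, hv, hs, ht⟩
    have hxm' : x % (b*2) = b - 1 := by rw [hxm, hu, hs]; omega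
    have hym' : y % (b*2) = b := by rw [hym, hv, ht]; omega
    have e1 : b*2*(x/(b*2)) + (b-1) = x := by omega
    have e2 : b*2*(y/(b*2)) + b = y := by omega
    have e3 : x/(b*2) = y/(b*2) := by rw [hxd, hyd]; exact hq
    rw [← e3] at e2
    exact ⟨by omega, hxm'⟩
  · rintro ⟨hy1, hxm'⟩
    have hu0 : x / b % 2 = 0 := by
      rcases Nat.mod_two_eq_zero_or_one (x / b) with h0 | h0
      · exact h0
      · rw [h0, mul_one] at hxm; omega
    have hs : x % b = b - 1 := by rw [hu0, mul_zero] at hxm; omega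
    have e1 : b*2*(x/(b*2)) + (b-1) = x := by omega
    have hyv : y % (b*2) = b := by
      have h1 : y = b * 2 * (x / (b*2)) + b := by omega
      rw [h1, Nat.mul_add_mod]; exact Nat.mod_eq_of_lt (by omega)
    have hv1 : y / b % 2 = 1 := by
      rcases Nat.mod_two_eq_zero_or_one (y / b) with h0 | h0
      · rw [h0, mul_zero] at hym; omega
      · exact h0
    have ht : y % b = 0 := by rw [hv1, mul_one] at hym; omega
    have hq : y / (b*2) = x / (b*2) := by
      have h1 : y = b * 2 * (x / (b*2)) + b := by omega
      have h2 := Nat.mul_add_div (show 0 < b*2 by omega) (x/(b*2)) b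
      have h3 : b / (b*2) = 0 := Nat.div_eq_of_lt (by omega)
      rw [h1, h2, h3]; omega
    rw [hxd, hyd] at hq
    exact ⟨hq.symm, hu0, hv1, hs, ht⟩

lemma mod_succ' {m x c : ℕ} (h : x % m = c) (hc : c + 1 < m) : (x + 1) % m = c + 1 := by
  have t := Nat.div_add_mod x m
  set P := m * (x / m) with hP
  have h1 : x + 1 = P + (c + 1) := by omega
  rw [h1, hP, Nat.mul_add_mod, Nat.mod_eq_of_lt hc]

lemma contra {a b y : ℕ} (h2 : 2 ≤ a) (hab : a < b)
    (ha : y % 2^a = 2^(a-1) - 1 ∨ y % 2^a = 2^(a-1))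
    (hb : y % 2^b = 2^(b-1) - 1 ∨ y % 2^b = 2^(b-1)) : False := by
  have hd : 2^a ∣ 2^(b-1) := pow_dvd_pow 2 (by omega)
  have hd2 : (2:ℕ)^a ∣ 2^b := pow_dvd_pow 2 (by omega)
  have hmod : y % 2^a = (y % 2^b) % 2^a := (Nat.mod_mod_of_dvd y hd2).symm
  obtain ⟨k, hk⟩ := hd
  have hpa : 1 ≤ (2:ℕ)^a := Nat.one_le_two_pow
  have hpb : 1 ≤ (2:ℕ)^(b-1) := Nat.one_le_two_pow
  have hk1 : 1 ≤ k := by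
    rcases Nat.eq_zero_or_pos k with h | h
    · subst h; simp at hk
    · exact h
  have hres : (y % 2^b) % 2^a = 0 ∨ (y % 2^b) % 2^a = 2^a - 1 := by
    rcases hb with h | h
    · right
      have e : 2^a*(k-1) + 2^a = 2^a*k := by rw [← Nat.mul_succ]; congr 1; omega
      have h' : y % 2^b = 2^a * (k-1) + (2^a - 1) := by omega
      rw [h', Nat.mul_add_mod]; exact Nat.mod_eq_of_lt (by omega)
    · left
      rw [h, hk, Nat.mul_mod_right]
  have ha1 : 2 ≤ (2:ℕ)^(a-1) := by
    calc (2:ℕ) = 2^1 := by norm_num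
    _ ≤ 2^(a-1) := Nat.pow_le_pow_right (by norm_num) (by omega)
  have hA : (2:ℕ)^a = 2^(a-1) * 2 := by
    rw [← pow_succ]; congr 1; omega
  omega

lemma contra' {a b y : ℕ} (h2 : 2 ≤ a) (h2' : 2 ≤ b) (hab : a ≠ b)
    (ha : y % 2^a = 2^(a-1) - 1 ∨ y % 2^a = 2^(a-1))
    (hb : y % 2^b = 2^(b-1) - 1 ∨ y % 2^b = 2^(b-1)) : False := by
  rcases Nat.lt_or_ge a b with h | h
  · exact contra h2 h ha hb
  · exact contra h2' (by omega) hb ha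
lemma s01_apply' (i j : Fin 2) : s01 i j = if (i:ℕ) = 0 ∧ (j:ℕ) = 1 then 1 else 0 := by
  fin_cases i <;> fin_cases j <;> simp [s01]

lemma s10_apply' (i j : Fin 2) : s10 i j = if (i:ℕ) = 1 ∧ (j:ℕ) = 0 then 1 else 0 := by
  fin_cases i <;> fin_cases j <;> simp [s10]

lemma tensPow_I2_apply (k : ℕ) (i j : Fin (2^k)) :
    tensPow I2 k i j = if (i:ℕ) = (j:ℕ) then 1 else 0 := by
  induction k with
  | zero => simp [tensPow, Matrix.one_apply, Fin.ext_iff]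
  | succ k ih =>
    show tens (tensPow I2 k) I2 i j = _
    unfold tens; rw [ih]
    simp only [I2, Matrix.one_apply, Fin.ext_iff]
    have hi := i.isLt
    have hj := j.isLt
    by_cases h : (i:ℕ) = (j:ℕ) <;> simp [h] <;> omega

lemma tensPow_s10_apply (k : ℕ) (i j : Fin (2^k)) :
    tensPow s10 k i j = if (i:ℕ) = 2^k - 1 ∧ (j:ℕ) = 0 then 1 else 0 := by
  induction k with
  | zero => simp [tensPow, Matrix.one_apply, Fin.ext_iff]
  | succ k ih =>
    show tens (tensPow s10 k) s10 i j = _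
    unfold tens; rw [ih, s10_apply']
    have hi := i.isLt
    have hj := j.isLt
    have hk : 1 ≤ 2^k := Nat.one_le_two_pow
    have h2 : (2:ℕ)^(k+1) = 2^k*2 := by ring
    simp only [h2] at hi hj ⊢
    split_ifs <;> (try norm_num) <;> omega

lemma tensPow_s01_apply (k : ℕ) (i j : Fin (2^k)) :
    tensPow s01 k i j = if (i:ℕ) = 0 ∧ (j:ℕ) = 2^k - 1 then 1 else 0 := by
  induction k with
  | zero => simp [tensPow, Matrix.one_apply, Fin.ext_iff]
  | succ k ih =>
    show tens (tensPow s01 k) s01 i j = _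
    unfold tens; rw [ih, s01_apply']
    have hi := i.isLt
    have hj := j.isLt
    have hk : 1 ≤ 2^k := Nat.one_le_two_pow
    have h2 : (2:ℕ)^(k+1) = 2^k*2 := by ring
    simp only [h2] at hi hj ⊢
    split_ifs <;> (try norm_num) <;> omega

lemma indic_mul_indic (P Q : Prop) [Decidable P] [Decidable Q] :
    (if P then (1:ℂ) else 0) * (if Q then 1 else 0) = if P ∧ Q then 1 else 0 := by
  split_ifs <;> simp_all

lemma Amat_apply (n j : ℕ) (h1 : 1 ≤ j) (hn : j ≤ n) (x y : Fin (2^n)) :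
    Amat n j x y = Complex.I *
      ((if (y:ℕ) = (x:ℕ) + 1 ∧ (x:ℕ) % 2^j = 2^(j-1) - 1 then 1 else 0)
        - (if (x:ℕ) = (y:ℕ) + 1 ∧ (y:ℕ) % 2^j = 2^(j-1) - 1 then 1 else 0)) := by
  rw [Amat, dif_pos ⟨h1, hn⟩]
  simp only [Matrix.smul_apply, Matrix.reindex_apply, Matrix.submatrix_apply, Matrix.sub_apply,
    smul_eq_mul, tens, finCongr_symm, finCongr_apply, Fin.coe_cast]
  rw [tensPow_I2_apply, tensPow_s10_apply, tensPow_s01_apply, s01_apply', s10_apply']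
  simp only [Fin.val_mk]
  have hb : 0 < 2^(j-1) := Nat.pow_pos (by norm_num)
  have hbj : (2:ℕ)^(j-1) * 2 = 2^j := by rw [← pow_succ]; congr 1; omega
  have k1 := keyA (2^(j-1)) (x:ℕ) (y:ℕ) hb
  have k2 := keyA (2^(j-1)) (y:ℕ) (x:ℕ) hb
  rw [hbj] at k1 k2
  rw [indic_mul_indic, indic_mul_indic, indic_mul_indic, indic_mul_indic]
  congr 1
  congr 1
  · split_ifs <;> (try norm_num) <;> omega
  · split_ifs <;> (try norm_num) <;> omega

lemma Amat_mul_eq_zero (n a b : ℕ) (h2 : 2 ≤ a) (h2' : 2 ≤ b) (hab : a ≠ b)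
    (hn : a ≤ n) (hn' : b ≤ n) : Amat n a * Amat n b = 0 := by
  ext x z
  rw [Matrix.mul_apply, Matrix.zero_apply]
  apply Finset.sum_eq_zero
  intro y _
  rw [Amat_apply n a (by omega) hn, Amat_apply n b (by omega) hn']
  have hz : ∀ (P Q : Prop) [Decidable P] [Decidable Q], ¬(P ∧ Q) →
      (if P then (1:ℂ) else 0) * (if Q then 1 else 0) = 0 := by
    intro P Q _ _ h
    split_ifs <;> simp_all
  have hsa : 2^(a-1) - 1 + 1 < 2^a := by
    have h1 : (2:ℕ)^a = 2^(a-1)*2 := by rw [← pow_succ]; congr 1; omega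
    have h2 : 1 ≤ (2:ℕ)^(a-1) := Nat.one_le_two_pow
    omega
  have hsb : 2^(b-1) - 1 + 1 < 2^b := by
    have h1 : (2:ℕ)^b = 2^(b-1)*2 := by rw [← pow_succ]; congr 1; omega
    have h2 : 1 ≤ (2:ℕ)^(b-1) := Nat.one_le_two_pow
    omega
  have hpa : 1 ≤ (2:ℕ)^(a-1) := Nat.one_le_two_pow
  have hpb : 1 ≤ (2:ℕ)^(b-1) := Nat.one_le_two_pow
  have hAC : (if (y:ℕ) = (x:ℕ) + 1 ∧ (x:ℕ) % 2^a = 2^(a-1) - 1 then (1:ℂ) else 0) *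
      (if (z:ℕ) = (y:ℕ) + 1 ∧ (y:ℕ) % 2^b = 2^(b-1) - 1 then 1 else 0) = 0 := by
    apply hz; rintro ⟨⟨hy1, hx1⟩, ⟨_, hy2⟩⟩
    have : ((x:ℕ) + 1) % 2^a = 2^(a-1) - 1 + 1 := mod_succ' hx1 hsa
    rw [← hy1] at this
    exact contra' (y := (y:ℕ)) h2 h2' hab (Or.inr (by omega)) (Or.inl hy2)
  have hAD : (if (y:ℕ) = (x:ℕ) + 1 ∧ (x:ℕ) % 2^a = 2^(a-1) - 1 then (1:ℂ) else 0) *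
      (if (y:ℕ) = (z:ℕ) + 1 ∧ (z:ℕ) % 2^b = 2^(b-1) - 1 then 1 else 0) = 0 := by
    apply hz; rintro ⟨⟨hy1, hx1⟩, ⟨hy2, hz1⟩⟩
    have t1 : ((x:ℕ) + 1) % 2^a = 2^(a-1) - 1 + 1 := mod_succ' hx1 hsa
    rw [← hy1] at t1
    have t2 : ((z:ℕ) + 1) % 2^b = 2^(b-1) - 1 + 1 := mod_succ' hz1 hsb
    rw [← hy2] at t2
    exact contra' (y := (y:ℕ)) h2 h2' hab (Or.inr (by omega)) (Or.inr (by omega))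
  have hBC : (if (x:ℕ) = (y:ℕ) + 1 ∧ (y:ℕ) % 2^a = 2^(a-1) - 1 then (1:ℂ) else 0) *
      (if (z:ℕ) = (y:ℕ) + 1 ∧ (y:ℕ) % 2^b = 2^(b-1) - 1 then 1 else 0) = 0 := by
    apply hz; rintro ⟨⟨_, hy1⟩, ⟨_, hy2⟩⟩
    exact contra' (y := (y:ℕ)) h2 h2' hab (Or.inl hy1) (Or.inl hy2)
  have hBD : (if (x:ℕ) = (y:ℕ) + 1 ∧ (y:ℕ) % 2^a = 2^(a-1) - 1 then (1:ℂ) else 0) *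
      (if (y:ℕ) = (z:ℕ) + 1 ∧ (z:ℕ) % 2^b = 2^(b-1) - 1 then 1 else 0) = 0 := by
    apply hz; rintro ⟨⟨_, hy1⟩, ⟨hy2, hz1⟩⟩
    have t2 : ((z:ℕ) + 1) % 2^b = 2^(b-1) - 1 + 1 := mod_succ' hz1 hsb
    rw [← hy2] at t2
    exact contra' (y := (y:ℕ)) h2 h2' hab (Or.inl hy1) (Or.inr (by omega))
  set A := (if (y:ℕ) = (x:ℕ) + 1 ∧ (x:ℕ) % 2^a = 2^(a-1) - 1 then (1:ℂ) else 0)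
  set B := (if (x:ℕ) = (y:ℕ) + 1 ∧ (y:ℕ) % 2^a = 2^(a-1) - 1 then (1:ℂ) else 0)
  set C := (if (z:ℕ) = (y:ℕ) + 1 ∧ (y:ℕ) % 2^b = 2^(b-1) - 1 then (1:ℂ) else 0)
  set D := (if (y:ℕ) = (z:ℕ) + 1 ∧ (z:ℕ) % 2^b = 2^(b-1) - 1 then (1:ℂ) else 0)
  calc Complex.I * (A - B) * (Complex.I * (C - D))
      = Complex.I * Complex.I * ((A * C - A * D) - (B * C - B * D)) := by ring
    _ = 0 := by rw [hAC, hAD, hBC, hBD]; ring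

/-- for `2 ≤ j < j' ≤ n` the operators `A_j` and `A_{j'}` commute. -/
theorem Amat_commute (n j j' : ℕ) (h2 : 2 ≤ j) (hjj : j < j') (hn : j' ≤ n) :
    Commute (Amat n j) (Amat n j') := by
  show Amat n j * Amat n j' = Amat n j' * Amat n j
  rw [Amat_mul_eq_zero n j j' h2 (by omega) (by omega) (by omega) hn,
    Amat_mul_eq_zero n j' j (by omega) h2 (by omega) hn (by omega)]

end
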